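/- arXiv:1910.00069 — 2 statements merged into one kernel-verified Lean document; each statement's English description precedes it below -/
import Mathlib

section
/- For any real number V₀ and any odd positive integer K, the function f(ξ) = e^{-V₀} · Σ_{k=0}^{K} (V₀ + log ξ)^k / k! defined on the positive reals is concave. -/
open Real Finset

private lemma sum_hasDerivAt (V₀ : ℝ) (n : ℕ) (x : ℝ) :
    HasDerivAt (fun x : ℝ => ∑ k ∈ Finset.range (n + 1), (V₀ + x) ^ k / (Nat.factorial k))
      (∑ k ∈ Finset.range n, (V₀ + x) ^ k / (Nat.factorial k)) x := by
  have h : ∀ k : ℕ, HasDerivAt (fun x : ℝ => (V₀ + x) ^ k / (Nat.factorial k))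
      (k * (V₀ + x) ^ (k - 1) / (Nat.factorial k)) x := by
    intro k
    have h1 : HasDerivAt (fun x : ℝ => (V₀ + x)) 1 x :=
      (hasDerivAt_id x).const_add V₀
    have := (h1.pow k).div_const (Nat.factorial k : ℝ)
    simpa [mul_comm] using this
  have hsum : HasDerivAt (fun x : ℝ => ∑ k ∈ Finset.range (n + 1), (V₀ + x) ^ k / (Nat.factorial k))
      (∑ k ∈ Finset.range (n + 1), (k : ℝ) * (V₀ + x) ^ (k - 1) / (Nat.factorial k)) x :=
    HasDerivAt.fun_sum (fun k _ => h k)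
  convert hsum using 1
  rw [Finset.sum_range_succ' (fun k => (k : ℝ) * (V₀ + x) ^ (k - 1) / (Nat.factorial k)) n]
  simp only [Nat.cast_zero, zero_mul, zero_div, add_zero, Nat.add_sub_cancel]
  refine Finset.sum_congr rfl fun k _ => ?_
  rw [Nat.factorial_succ]
  push_cast
  field_simp

theorem pbbvi_concave (V₀ : ℝ) (K : ℕ) (hK : Odd K) (hKpos : 0 < K) :
    ConcaveOn ℝ (Set.Ioi (0 : ℝ))
      (fun ξ : ℝ => Real.exp (-V₀) *
        ∑ k ∈ Finset.range (K + 1), (V₀ + Real.log ξ) ^ k / (Nat.factorial k)) := by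
  obtain ⟨m, rfl⟩ : ∃ m, K = m + 1 := ⟨K - 1, (Nat.succ_pred_eq_of_pos hKpos).symm⟩
  have hmeven : Even m := by
    rcases hK with ⟨j, hj⟩
    exact ⟨j, by omega⟩
  set c := Real.exp (-V₀) with hc
  -- define f' and f''
  set f' : ℝ → ℝ := fun ξ => c * ((∑ k ∈ Finset.range (m + 1),
      (V₀ + Real.log ξ) ^ k / (Nat.factorial k)) * ξ⁻¹) with hf'def
  set f'' : ℝ → ℝ := fun ξ => c *
      ((∑ k ∈ Finset.range m, (V₀ + Real.log ξ) ^ k / (Nat.factorial k)) * ξ⁻¹ * ξ⁻¹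
        + (∑ k ∈ Finset.range (m + 1), (V₀ + Real.log ξ) ^ k / (Nat.factorial k)) *
          (-(ξ ^ 2)⁻¹)) with hf''def
  have hint : interior (Set.Ioi (0 : ℝ)) = Set.Ioi (0 : ℝ) := interior_Ioi
  apply concaveOn_of_hasDerivWithinAt2_nonpos (f' := f') (f'' := f'') (convex_Ioi 0)
  · -- continuity
    apply ContinuousOn.mul continuousOn_const
    apply continuousOn_finset_sum
    intro k _
    have hlog : ContinuousOn Real.log (Set.Ioi (0:ℝ)) :=
      Real.continuousOn_log.mono (fun x hx => ne_of_gt hx)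
    exact ((continuousOn_const.add hlog).pow k).div_const _
  · intro x hx
    rw [hint] at hx ⊢
    have hx0 : (0 : ℝ) < x := hx
    have h1 : HasDerivAt (fun ξ : ℝ => ∑ k ∈ Finset.range (m + 1 + 1),
        (V₀ + Real.log ξ) ^ k / (Nat.factorial k))
        ((∑ k ∈ Finset.range (m + 1), (V₀ + Real.log x) ^ k / (Nat.factorial k)) * x⁻¹) x :=
      (sum_hasDerivAt V₀ (m + 1) (Real.log x)).comp x (Real.hasDerivAt_log hx0.ne')
    exact ((h1.const_mul c).hasDerivWithinAt)
  · intro x hx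
    rw [hint] at hx ⊢
    have hx0 : (0 : ℝ) < x := hx
    have hP : HasDerivAt (fun ξ : ℝ => ∑ k ∈ Finset.range (m + 1),
        (V₀ + Real.log ξ) ^ k / (Nat.factorial k))
        ((∑ k ∈ Finset.range m, (V₀ + Real.log x) ^ k / (Nat.factorial k)) * x⁻¹) x :=
      (sum_hasDerivAt V₀ m (Real.log x)).comp x (Real.hasDerivAt_log hx0.ne')
    have hinv : HasDerivAt (fun ξ : ℝ => ξ⁻¹) (-(x ^ 2)⁻¹) x := by
      simpa using hasDerivAt_inv hx0.ne'
    have := ((hP.mul hinv).const_mul c)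
    refine (this.congr_deriv ?_).hasDerivWithinAt
    simp only [hf''def]
  · intro x hx
    rw [hint] at hx
    have hx0 : (0 : ℝ) < x := hx
    have key : (∑ k ∈ Finset.range m, (V₀ + Real.log x) ^ k / (Nat.factorial k))
        - (∑ k ∈ Finset.range (m + 1), (V₀ + Real.log x) ^ k / (Nat.factorial k))
        = -((V₀ + Real.log x) ^ m / (Nat.factorial m)) := by
      rw [Finset.sum_range_succ]; ring
    have hpow : (0 : ℝ) ≤ (V₀ + Real.log x) ^ m := hmeven.pow_nonneg _
    have hc0 : (0 : ℝ) < c := Real.exp_pos _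
    have hfact : (0 : ℝ) < (Nat.factorial m : ℝ) := by positivity
    have hrw : f'' x = c * (-((V₀ + Real.log x) ^ m / (Nat.factorial m)) * (x ^ 2)⁻¹) := by
      simp only [hf''def]
      rw [← key]
      field_simp
      ring
    rw [hrw]
    have : (0:ℝ) ≤ ((V₀ + Real.log x) ^ m / (Nat.factorial m)) * (x ^ 2)⁻¹ := by positivity
    nlinarith
end

section
/- Let X be a real random variable with finite moments up to order K (K odd), and suppose V₀* satisfies E[(V₀* + X)^K] = 0. Then the perturbative bound at V₀* equals e^{-V₀*} E[h(V₀* + X)] where h(u) = Σ_{k=0}^{K-1} u^k/k!, and this value is strictly positive. -/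
open MeasureTheory

private lemma expPartial_deriv (n : ℕ) (x : ℝ) :
    HasDerivAt (fun y : ℝ => ∑ k ∈ Finset.range (n + 1), y ^ k / (Nat.factorial k))
      (∑ k ∈ Finset.range n, x ^ k / (Nat.factorial k)) x := by
  have h : HasDerivAt (fun y : ℝ => ∑ k ∈ Finset.range (n + 1), y ^ k / (Nat.factorial k))
      (∑ k ∈ Finset.range (n + 1), (k : ℝ) * x ^ (k - 1) / (Nat.factorial k)) x := by
    apply HasDerivAt.fun_sum
    intro k _
    simpa [div_eq_mul_inv] using (hasDerivAt_pow k x).mul_const ((Nat.factorial k : ℝ)⁻¹)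
  convert h using 1
  rw [Finset.sum_range_succ']
  simp only [Nat.cast_zero, zero_mul, Nat.factorial_zero, Nat.cast_one, zero_div, add_zero]
  apply Finset.sum_congr rfl
  intro k _
  have hfac : (Nat.factorial (k + 1) : ℝ) = (k + 1) * Nat.factorial k := by
    push_cast [Nat.factorial_succ]; ring
  have hk1 : ((k : ℝ) + 1) ≠ 0 := by positivity
  field_simp [hfac]
  rw [Nat.add_sub_cancel, hfac]; push_cast; ring

private lemma expPartial_pos {n : ℕ} (hn : Even n) (u : ℝ) :
    0 < ∑ k ∈ Finset.range (n + 1), u ^ k / (Nat.factorial k) := by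
  rcases le_or_gt 0 u with hu | hu
  · have h1 : (1 : ℝ) ≤ ∑ k ∈ Finset.range (n + 1), u ^ k / (Nat.factorial k) := by
      have := Finset.single_le_sum (f := fun k => u ^ k / (Nat.factorial k : ℝ))
        (fun i _ => by positivity) (Finset.mem_range.2 (Nat.succ_pos n))
      simpa using this
    linarith
  · set f : ℝ → ℝ := fun y => ∑ k ∈ Finset.range (n + 1), y ^ k / (Nat.factorial k) with hf
    set g : ℝ → ℝ := fun y => f y * Real.exp (-y) with hg
    have hders : ∀ x : ℝ, HasDerivAt g
        (-(x ^ n / (Nat.factorial n)) * Real.exp (-x)) x := by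
      intro x
      have h1 := (expPartial_deriv n x).mul ((Real.hasDerivAt_exp (-x)).comp x
        ((hasDerivAt_id x).neg))
      refine HasDerivAt.congr_deriv h1 ?_
      simp only [Function.comp_apply, Finset.sum_range_succ]
      ring
    have hanti : Antitone g := by
      apply antitone_of_deriv_nonpos
      · intro x; exact (hders x).differentiableAt
      · intro x
        rw [(hders x).deriv]
        have hx : (0:ℝ) ≤ x ^ n := hn.pow_nonneg x
        have : (0:ℝ) ≤ x ^ n / (Nat.factorial n) := by positivity
        nlinarith [Real.exp_pos (-x)]
    have hg0 : g 0 = 1 := by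
      simp only [hg, hf]
      rw [Finset.sum_eq_single 0]
      · simp
      · intro k _ hk; simp [zero_pow hk]
      · simp
    have := hanti (le_of_lt hu)
    rw [hg0] at this
    have hexp := Real.exp_pos (-u)
    have : f u * Real.exp (-u) ≥ 1 := this
    nlinarith

theorem pbbvi_nontrivial {Ω : Type*} [MeasurableSpace Ω] (μ : Measure Ω)
    [IsProbabilityMeasure μ] (X : Ω → ℝ) (K : ℕ) (hK : Odd K) (hKpos : 0 < K)
    (hint : ∀ k ≤ K, Integrable (fun ω => (X ω) ^ k) μ) (V₀ : ℝ)
    (hcrit : ∫ ω, (V₀ + X ω) ^ K ∂μ = 0) :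
    (Real.exp (-V₀) *
        ∑ k ∈ Finset.range (K + 1), (∫ ω, (V₀ + X ω) ^ k ∂μ) / (Nat.factorial k)
      = Real.exp (-V₀) *
        ∫ ω, (∑ k ∈ Finset.range K, (V₀ + X ω) ^ k / (Nat.factorial k)) ∂μ) ∧
    0 < Real.exp (-V₀) *
        ∑ k ∈ Finset.range (K + 1), (∫ ω, (V₀ + X ω) ^ k ∂μ) / (Nat.factorial k) := by
  -- integrability of (V₀ + X)^k
  have hintp : ∀ k ≤ K, Integrable (fun ω => (V₀ + X ω) ^ k) μ := by
    intro k hk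
    have heq : (fun ω => (V₀ + X ω) ^ k) =
        fun ω => ∑ j ∈ Finset.range (k + 1),
          V₀ ^ j * X ω ^ (k - j) * (Nat.choose k j : ℝ) := by
      funext ω; rw [add_pow]
    rw [heq]
    apply integrable_finset_sum
    intro j _
    exact ((hint (k - j) (le_trans (Nat.sub_le k j) hk)).const_mul (V₀ ^ j)).mul_const _
  -- integral of the truncated exponential equals the truncated sum of moments
  have hintsum : Integrable
      (fun ω => ∑ k ∈ Finset.range K, (V₀ + X ω) ^ k / (Nat.factorial k)) μ := by
    apply integrable_finset_sum
    intro k hk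
    simpa [div_eq_mul_inv] using
      (hintp k (le_of_lt (Finset.mem_range.1 hk))).mul_const ((Nat.factorial k : ℝ)⁻¹)
  have hswap : ∫ ω, (∑ k ∈ Finset.range K, (V₀ + X ω) ^ k / (Nat.factorial k)) ∂μ
      = ∑ k ∈ Finset.range K, (∫ ω, (V₀ + X ω) ^ k ∂μ) / (Nat.factorial k) := by
    rw [integral_finset_sum]
    · exact Finset.sum_congr rfl fun k _ => by rw [integral_div]
    · intro k hk
      simpa [div_eq_mul_inv] using
        (hintp k (le_of_lt (Finset.mem_range.1 hk))).mul_const ((Nat.factorial k : ℝ)⁻¹)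
  have hsum_eq : ∑ k ∈ Finset.range (K + 1), (∫ ω, (V₀ + X ω) ^ k ∂μ) / (Nat.factorial k)
      = ∑ k ∈ Finset.range K, (∫ ω, (V₀ + X ω) ^ k ∂μ) / (Nat.factorial k) := by
    rw [Finset.sum_range_succ, hcrit]
    simp
  constructor
  · rw [hsum_eq, hswap]
  · -- positivity
    have hKm : K = (K - 1) + 1 := (Nat.succ_pred_eq_of_pos hKpos).symm
    have hEven : Even (K - 1) := by
      rcases hK with ⟨m, hm⟩
      have : K - 1 = 2 * m := by omega
      exact ⟨m, by omega⟩
    have hpos : ∀ ω, 0 < ∑ k ∈ Finset.range K, (V₀ + X ω) ^ k / (Nat.factorial k) := by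
      intro ω
      rw [hKm]
      exact expPartial_pos hEven (V₀ + X ω)
    have hintpos : 0 < ∫ ω, (∑ k ∈ Finset.range K, (V₀ + X ω) ^ k / (Nat.factorial k)) ∂μ := by
      rw [integral_pos_iff_support_of_nonneg (fun ω => (hpos ω).le) hintsum]
      have : Function.support (fun ω => ∑ k ∈ Finset.range K,
          (V₀ + X ω) ^ k / (Nat.factorial k)) = Set.univ := by
        ext ω; simp [Function.mem_support, (hpos ω).ne']
      rw [this]
      simp
    rw [hsum_eq, ← hswap]
    exact mul_pos (Real.exp_pos _) hintpos
end
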